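/- Let r ∈ int(D_d) be reduced and x ∈ ℤ^d. Then 0 ∈ T_r(x) if and only if x is purely periodic under τ_r, i.e., τ_r^p(x) = x for some p ≥ 1. Moreover, there are only finitely many purely periodic points. -/

import Mathlib

open Matrix Filter

noncomputable section

/-- Scalar product r·z of a real vector with an integer vector. -/
def srsDot {d : ℕ} (r : Fin d → ℝ) (z : Fin d → ℤ) : ℝ := ∑ i, r i * (z i : ℝ)

/-- The shift radix map τ_r(z) = (z_1,...,z_{d-1}, -⌊r·z⌋). -/
def srsTau {d : ℕ} (r : Fin d → ℝ) (z : Fin d → ℤ) : Fin d → ℤ :=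
  fun i => if h : (i : ℕ) + 1 < d then z ⟨(i : ℕ) + 1, h⟩ else -⌊srsDot r z⌋

/-- The companion matrix M_r of r. -/
def companion {d : ℕ} (r : Fin d → ℝ) : Matrix (Fin d) (Fin d) ℝ :=
  fun i j => if (i : ℕ) + 1 < d then (if (j : ℕ) = (i : ℕ) + 1 then 1 else 0) else -r j

/-- The vector (0,...,0,v)^t. -/
def digitVec {d : ℕ} (v : ℝ) : Fin d → ℝ := fun i => if (i : ℕ) + 1 = d then v else 0

/-- Coordinatewise cast of an integer vector to a real vector. -/
def intToReal {d : ℕ} (z : Fin d → ℤ) : Fin d → ℝ := fun i => (z i : ℝ)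

/-- M_r is contractive (spectral radius < 1). -/
def srsContractive {d : ℕ} (r : Fin d → ℝ) : Prop :=
  ∃ C > (0:ℝ), ∃ ρ : ℝ, 0 ≤ ρ ∧ ρ < 1 ∧
    ∀ (n : ℕ) (x : Fin d → ℝ), ‖((companion r) ^ n).mulVec x‖ ≤ C * ρ ^ n * ‖x‖

/-- The SRS tile T_r(x), as the set of limit points lim M_r^n z_{-n} with
τ_r^n(z_{-n}) = x. -/
def srsTile {d : ℕ} (r : Fin d → ℝ) (x : Fin d → ℤ) : Set (Fin d → ℝ) :=
  {t | ∃ z : ℕ → (Fin d → ℤ), (∀ n, (srsTau r)^[n] (z n) = x) ∧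
    Tendsto (fun n => ((companion r) ^ n).mulVec (intToReal (z n))) atTop (nhds t)}

/-!
Since `τ_r(z) = M_r z + (0,…,0,{r·z})` and `‖M_r^n‖ ≤ C ρ^n`, the orbit `τ_r^n(z)` stays within
the fixed distance `C/(1-ρ)` of `M_r^n z`. A periodic point `z` is therefore within that distance
of `M_r^{pn} z → 0`, so all periodic points lie in one finite ball; running backwards along the
cycle of a periodic `x` then gives preimages `z_n` with `M_r^n z_n → 0`. Conversely, if
`M_r^n z_n → 0` with `τ_r^n(z_n) = x`, then as `M_r` is invertible (`r_0 ≠ 0`) also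
`M_r^{n-k} z_n → 0`, so `τ_r^{n-k}(z_n)` is a `τ_r^k`-preimage of `x` in a fixed ball for every
`k`; two of these coincide, which makes `x` periodic.
-/

open Function Topology

namespace Function

variable {α : Type*} {f : α → α} {x : α}

theorem mem_periodicPts_of_forall_exists_iterate_eq {S : Set α} (hS : S.Finite)
    (h : ∀ k, ∃ w ∈ S, f^[k] w = x) : x ∈ periodicPts f := by
  choose w hwS hwx using h
  obtain ⟨a, b, hab, hw⟩ := hS.exists_lt_map_eq_of_forall_mem hwS
  refine ⟨b - a, Nat.sub_pos_of_lt hab, ?_⟩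
  calc f^[b - a] x = f^[b - a] (f^[a] (w a)) := by rw [hwx]
    _ = f^[b] (w b) := by rw [← iterate_add_apply, Nat.sub_add_cancel hab.le, hw]
    _ = x := hwx b

theorem exists_mem_periodicPts_iterate_eq (hx : x ∈ periodicPts f) (n : ℕ) :
    ∃ y ∈ periodicPts f, f^[n] y = x := by
  obtain ⟨p, hp, hpx⟩ := mem_periodicPts.1 hx
  obtain ⟨y, hy, hyx⟩ := ((bijOn_ptsOfPeriod f hp).iterate n).surjOn hpx
  exact ⟨y, mk_mem_periodicPts hp hy, hyx⟩

end Function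

theorem Matrix.tendsto_pow_mulVec_add_of_isUnit {n R : Type*} [Fintype n] [DecidableEq n]
    [CommRing R] [TopologicalSpace R] [IsTopologicalRing R] {A : Matrix n n R} (hA : IsUnit A)
    {u : ℕ → n → R} (h : Tendsto (fun m => A ^ m *ᵥ u m) atTop (𝓝 0)) (k : ℕ) :
    Tendsto (fun m => A ^ m *ᵥ u (m + k)) atTop (𝓝 0) := by
  have hcont : Continuous fun v : n → R => (A ^ k)⁻¹ *ᵥ v :=
    continuous_const.matrix_mulVec continuous_id
  have hk : Tendsto (fun m => (A ^ k)⁻¹ *ᵥ (A ^ (m + k) *ᵥ u (m + k))) atTop (𝓝 0) :=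
    (hcont.tendsto' 0 0 (mulVec_zero _)).comp ((tendsto_add_atTop_iff_nat k).2 h)
  refine hk.congr fun m => ?_
  rw [mulVec_mulVec, add_comm, pow_add, nonsing_inv_mul_cancel_left (A := A ^ k) _
    ((isUnit_iff_isUnit_det _).1 (hA.pow k))]

section Companion

variable {d : ℕ} (r : Fin d → ℝ)

theorem companion_mulVec_apply (v : Fin d → ℝ) (i : Fin d) :
    (companion r *ᵥ v) i = if h : (i : ℕ) + 1 < d then v ⟨i + 1, h⟩ else -∑ j, r j * v j := by
  split_ifs with h
  · simp only [mulVec, dotProduct, companion, if_pos h, ite_mul, one_mul, zero_mul]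
    rw [Finset.sum_eq_single ⟨i + 1, h⟩ (fun j _ hj => if_neg fun hji => hj (Fin.ext hji))
      (by simp)]
    simp
  · simp [mulVec, dotProduct, companion, h]

theorem eq_zero_of_companion_mulVec_eq_zero (hd : 0 < d) (hr0 : r ⟨0, hd⟩ ≠ 0)
    {v : Fin d → ℝ} (hv : companion r *ᵥ v = 0) : v = 0 := by
  have hpos : ∀ j : Fin d, 0 < (j : ℕ) → v j = 0 := by
    intro j hj
    have := congrFun hv ⟨j - 1, by omega⟩
    rw [companion_mulVec_apply, dif_pos (by simp only; omega)] at this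
    simpa [Nat.sub_add_cancel hj] using this
  have h0 : v ⟨0, hd⟩ = 0 := by
    have := congrFun hv ⟨d - 1, by omega⟩
    rw [companion_mulVec_apply, dif_neg (by simp only; omega),
      Finset.sum_eq_single ⟨0, hd⟩ (fun j _ hj => by
        rw [hpos j (Nat.pos_of_ne_zero fun h => hj (Fin.ext h)), mul_zero]) (by simp)] at this
    simpa [hr0] using this
  funext j
  rcases Nat.eq_zero_or_pos j with hj | hj
  · rw [show j = ⟨0, hd⟩ from Fin.ext hj, h0]; rfl
  · exact hpos j hj

theorem isUnit_companion (hd : 0 < d) (hr0 : r ⟨0, hd⟩ ≠ 0) : IsUnit (companion r) := by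
  rw [isUnit_iff_isUnit_det, isUnit_iff_ne_zero, Ne, ← exists_mulVec_eq_zero_iff]
  rintro ⟨v, hv0, hv⟩
  exact hv0 (eq_zero_of_companion_mulVec_eq_zero r hd hr0 hv)

end Companion

theorem norm_intToReal {d : ℕ} (z : Fin d → ℤ) : ‖intToReal z‖ = ‖z‖ := by
  simp only [intToReal, Pi.norm_def]
  congr 2

theorem finite_setOf_norm_intToReal_le {d : ℕ} (B : ℝ) :
    {z : Fin d → ℤ | ‖intToReal z‖ ≤ B}.Finite := by
  refine (isCompact_closedBall (0 : Fin d → ℤ) B).finite_of_discrete.subset fun z hz => ?_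
  rwa [mem_closedBall_zero_iff, ← norm_intToReal]

theorem norm_digitVec_le {d : ℕ} (v : ℝ) : ‖(digitVec v : Fin d → ℝ)‖ ≤ |v| := by
  refine (pi_norm_le_iff_of_nonneg (abs_nonneg v)).2 fun i => ?_
  simp only [digitVec]
  split_ifs <;> simp

section SRS

variable {d : ℕ} {r : Fin d → ℝ}

variable (r) in
theorem intToReal_srsTau (z : Fin d → ℤ) :
    intToReal (srsTau r z) = companion r *ᵥ intToReal z + digitVec (Int.fract (srsDot r z)) := by
  funext i
  simp only [Pi.add_apply, companion_mulVec_apply, srsTau, digitVec, intToReal]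
  split_ifs with h h'
  · omega
  · simp
  · rw [Int.fract, srsDot]
    push_cast
    ring
  · omega

theorem norm_intToReal_iterate_srsTau_sub_le {C ρ : ℝ} (hC : 0 ≤ C) (hρ : 0 ≤ ρ)
    (hbound : ∀ (n : ℕ) (v : Fin d → ℝ), ‖companion r ^ n *ᵥ v‖ ≤ C * ρ ^ n * ‖v‖)
    (n : ℕ) (z : Fin d → ℤ) :
    ‖intToReal ((srsTau r)^[n] z) - companion r ^ n *ᵥ intToReal z‖ ≤
      C * ∑ j ∈ Finset.range n, ρ ^ j := by
  induction n generalizing z with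
  | zero => simp
  | succ n ih =>
    set e := digitVec (Int.fract (srsDot r z))
    have hsplit : intToReal ((srsTau r)^[n + 1] z) - companion r ^ (n + 1) *ᵥ intToReal z =
        (intToReal ((srsTau r)^[n] (srsTau r z)) - companion r ^ n *ᵥ intToReal (srsTau r z)) +
          companion r ^ n *ᵥ e := by
      rw [iterate_succ_apply, intToReal_srsTau, mulVec_add, pow_succ, ← mulVec_mulVec]
      abel
    have he1 : ‖e‖ ≤ 1 := (norm_digitVec_le _).trans <| by
      rw [abs_of_nonneg (Int.fract_nonneg _)]; exact (Int.fract_lt_one _).le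
    calc _ ≤ C * ∑ j ∈ Finset.range n, ρ ^ j + C * ρ ^ n * ‖e‖ := by
          rw [hsplit]; exact (norm_add_le _ _).trans (add_le_add (ih _) (hbound n e))
      _ ≤ C * ∑ j ∈ Finset.range (n + 1), ρ ^ j := by
          rw [Finset.sum_range_succ, mul_add]
          exact add_le_add le_rfl (mul_le_of_le_one_right (a := C * ρ ^ n) (by positivity) he1)

namespace srsContractive

theorem exists_norm_iterate_sub_le (hr : srsContractive r) : ∃ B : ℝ, ∀ (n : ℕ) (z : Fin d → ℤ),
    ‖intToReal ((srsTau r)^[n] z) - companion r ^ n *ᵥ intToReal z‖ ≤ B := by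
  obtain ⟨C, hC, ρ, hρ0, hρ1, hbound⟩ := hr
  refine ⟨C * (1 - ρ)⁻¹, fun n z => ?_⟩
  refine (norm_intToReal_iterate_srsTau_sub_le (le_of_lt hC) hρ0 hbound n z).trans
    (mul_le_mul_of_nonneg_left ?_ (le_of_lt hC))
  have hgeom := geom_sum_Ico_le_of_lt_one (m := 0) (n := n) hρ0 hρ1
  rwa [← Finset.range_eq_Ico, pow_zero, one_div] at hgeom

theorem tendsto_pow_mulVec (hr : srsContractive r) {u : ℕ → Fin d → ℝ} {K : ℝ}
    (hu : ∀ n, ‖u n‖ ≤ K) : Tendsto (fun n => companion r ^ n *ᵥ u n) atTop (𝓝 0) := by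
  obtain ⟨C, hC, ρ, hρ0, hρ1, hbound⟩ := hr
  refine squeeze_zero_norm
    (fun n => (hbound n (u n)).trans (mul_le_mul_of_nonneg_left (hu n) (by positivity))) ?_
  simpa using ((tendsto_pow_atTop_nhds_zero_of_lt_one hρ0 hρ1).const_mul C).mul_const K

theorem norm_le_of_mem_periodicPts (hr : srsContractive r) {B : ℝ}
    (hB : ∀ (n : ℕ) (z : Fin d → ℤ),
      ‖intToReal ((srsTau r)^[n] z) - companion r ^ n *ᵥ intToReal z‖ ≤ B)
    {z : Fin d → ℤ} (hz : z ∈ periodicPts (srsTau r)) : ‖intToReal z‖ ≤ B := by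
  obtain ⟨p, hp, hpz⟩ := mem_periodicPts.1 hz
  have hlim : Tendsto (fun n => B + ‖companion r ^ (p * n) *ᵥ intToReal z‖) atTop (𝓝 (B + 0)) :=
    tendsto_const_nhds.add <| by
      simpa using ((hr.tendsto_pow_mulVec fun _ => le_rfl).comp
        (tendsto_id.nsmul_atTop hp)).norm
  refine ge_of_tendsto' (by simpa using hlim) fun n => ?_
  have h := hB (p * n) z
  rw [(hpz.mul_const n).eq] at h
  linarith [norm_sub_norm_le (intToReal z) (companion r ^ (p * n) *ᵥ intToReal z)]

theorem finite_periodicPts (hr : srsContractive r) : (periodicPts (srsTau r)).Finite := by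
  obtain ⟨B, hB⟩ := hr.exists_norm_iterate_sub_le
  exact (finite_setOf_norm_intToReal_le B).subset fun z hz => hr.norm_le_of_mem_periodicPts hB hz

theorem zero_mem_srsTile_of_mem_periodicPts (hr : srsContractive r) {x : Fin d → ℤ}
    (hx : x ∈ periodicPts (srsTau r)) : 0 ∈ srsTile r x := by
  obtain ⟨B, hB⟩ := hr.exists_norm_iterate_sub_le
  choose y hy hyx using exists_mem_periodicPts_iterate_eq hx
  exact ⟨y, hyx, hr.tendsto_pow_mulVec fun n => hr.norm_le_of_mem_periodicPts hB (hy n)⟩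

theorem mem_periodicPts_of_zero_mem_srsTile (hr : srsContractive r) (hd : 0 < d)
    (hr0 : r ⟨0, hd⟩ ≠ 0) {x : Fin d → ℤ} (hx : 0 ∈ srsTile r x) :
    x ∈ periodicPts (srsTau r) := by
  obtain ⟨z, hzx, hz⟩ := hx
  obtain ⟨B, hB⟩ := hr.exists_norm_iterate_sub_le
  refine mem_periodicPts_of_forall_exists_iterate_eq (finite_setOf_norm_intToReal_le (B + 1))
    fun k => ?_
  have hsmall := (tendsto_pow_mulVec_add_of_isUnit (isUnit_companion r hd hr0) hz k).norm
  obtain ⟨n, hn⟩ := (hsmall.eventually_lt_const (by simp : ‖(0 : Fin d → ℝ)‖ < 1)).exists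
  refine ⟨(srsTau r)^[n] (z (n + k)), ?_, by rw [← iterate_add_apply, add_comm, hzx]⟩
  have h := hB n (z (n + k))
  show ‖intToReal _‖ ≤ B + 1
  linarith [norm_sub_norm_le (intToReal ((srsTau r)^[n] (z (n + k))))
    (companion r ^ n *ᵥ intToReal (z (n + k)))]

end srsContractive

end SRS

/-- 0 ∈ T_r(x) iff x is purely periodic under τ_r; moreover there
are only finitely many purely periodic points. -/
theorem zero_mem_srsTile_iff_purely_periodic (d : ℕ) (hd : 0 < d) (r : Fin d → ℝ)
    (hr0 : r ⟨0, hd⟩ ≠ 0) (hcontr : srsContractive r) (x : Fin d → ℤ) :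
    ((0 : Fin d → ℝ) ∈ srsTile r x ↔ ∃ p : ℕ, 1 ≤ p ∧ (srsTau r)^[p] x = x) ∧
    {z : Fin d → ℤ | ∃ p : ℕ, 1 ≤ p ∧ (srsTau r)^[p] z = z}.Finite :=
  -- `z ∈ periodicPts f` unfolds to `∃ p, 0 < p ∧ f^[p] z = z`, and `0 < p` to `1 ≤ p`.
  ⟨⟨hcontr.mem_periodicPts_of_zero_mem_srsTile hd hr0,
      hcontr.zero_mem_srsTile_of_mem_periodicPts⟩,
    hcontr.finite_periodicPts⟩
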